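/- arXiv:math/0201073 — 2 statements merged into one kernel-verified Lean document; each statement's English description precedes it below -/
import Mathlib

section
/- Let F : A → B be an additive functor between abelian categories such that: (i) F is exact; (ii) every object of A has finite length, and for any two simple objects L₁, L₂ of A the map Hom_A(L₁, L₂) → Hom_B(F L₁, F L₂) induced by F is an isomorphism; (iii) there exists an additive functor F′ : B → A such that F′ ∘ F is naturally isomorphic to the identity functor of A. Then F is fully faithful, i.e. for all objects X, Y of A the map Hom_A(X, Y) → Hom_B(F X, F Y) induced by F is an isomorphism. -/
open CategoryTheory CategoryTheory.Limits

universe v₁ v₂ u₁ u₂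

/-- An object of an abelian category has finite length if it admits a finite composition
series with simple subquotients; equivalently, it can be built from a zero object by
finitely many extensions whose cokernels are simple. -/
inductive CategoryTheory.FiniteLength {A : Type u₁} [Category.{v₁} A] [Abelian A] : A → Prop
  | of_isZero {X : A} (h : IsZero X) : FiniteLength X
  | of_extension {X Y : A} (f : X ⟶ Y) (hf : Mono f) (hX : FiniteLength X)
      (hq : Simple (cokernel f)) : FiniteLength Y

section Aux

variable {A : Type u₁} {B : Type u₂} [Category.{v₁} A] [Category.{v₂} B]
  [Abelian A] [Abelian B] (F : A ⥤ B) (F' : B ⥤ A) (η : F ⋙ F' ≅ 𝟭 A)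

include F' η in
/-- If `F.map p` has a section, then `p` has a section. -/
lemma section_of_map_section {X Y : A} (p : X ⟶ Y) (s : F.obj Y ⟶ F.obj X)
    (hs : s ≫ F.map p = 𝟙 _) : ∃ t : Y ⟶ X, t ≫ p = 𝟙 Y := by
  refine ⟨η.inv.app Y ≫ F'.map s ≫ η.hom.app X, ?_⟩
  have h1 : η.hom.app X ≫ p = F'.map (F.map p) ≫ η.hom.app Y := (η.hom.naturality p).symm
  rw [Category.assoc, Category.assoc, h1, ← Category.assoc (F'.map s), ← F'.map_comp, hs,
    F'.map_id, Category.id_comp, Iso.inv_hom_id_app]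
  rfl

include F' η in
/-- If `F.map m` has a retraction, then `m` has a retraction. -/
lemma retraction_of_map_retraction {X Y : A} (m : X ⟶ Y) (r : F.obj Y ⟶ F.obj X)
    (hr : F.map m ≫ r = 𝟙 _) : ∃ t : Y ⟶ X, m ≫ t = 𝟙 X := by
  refine ⟨η.inv.app Y ≫ F'.map r ≫ η.hom.app X, ?_⟩
  have h1 : m ≫ η.inv.app Y = η.inv.app X ≫ F'.map (F.map m) := η.inv.naturality m
  rw [← Category.assoc, h1, Category.assoc, ← Category.assoc (F'.map (F.map m)), ← F'.map_comp,
    hr, F'.map_id, Category.id_comp, Iso.inv_hom_id_app]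
  rfl

variable [F.Additive] [PreservesFiniteLimits F] [PreservesFiniteColimits F]

include η in
/-- Surjectivity of `F` on `Hom(X, M)` for `M` simple, by induction on the length of `X`. -/
lemma surj_to_simple
    (hsimple : ∀ (L₁ L₂ : A), Simple L₁ → Simple L₂ →
      Function.Bijective (fun f : L₁ ⟶ L₂ => F.map f)) :
    ∀ {X : A}, CategoryTheory.FiniteLength X → ∀ (M : A), Simple M →
      ∀ φ : F.obj X ⟶ F.obj M, ∃ g : X ⟶ M, F.map g = φ := by
  intro X hX
  induction hX with
  | of_isZero h =>
    intro M hM φ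
    exact ⟨0, by rw [F.map_zero]; exact ((F.map_isZero h).eq_of_src 0 φ)⟩
  | of_extension f hf hW hq ih =>
    intro M hM φ
    haveI := hf
    obtain ⟨g, hg⟩ := ih M hM (F.map f ≫ φ)
    have w : F.map f ≫ φ = F.map g ≫ 𝟙 (F.obj M) := by rw [hg, Category.comp_id]
    -- In `B`, `F.map (pushout.inr f g)` has a retraction, hence so does `pushout.inr f g`.
    have hrB : F.map (pushout.inr f g) ≫
        ((PreservesPushout.iso F f g).inv ≫ pushout.desc φ (𝟙 _) w) = 𝟙 _ := by
      rw [PreservesPushout.inr_iso_inv_assoc, pushout.inr_desc]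
    obtain ⟨t, ht⟩ := retraction_of_map_retraction F F' η (pushout.inr f g) _ hrB
    -- `gt` extends `g` along `f`
    set gt : _ ⟶ M := pushout.inl f g ≫ t with hgt
    have hfg : f ≫ gt = g := by
      rw [hgt, ← Category.assoc, pushout.condition, Category.assoc, ht, Category.comp_id]
    have hx : F.map f ≫ (φ - F.map gt) = 0 := by
      rw [Preadditive.comp_sub, ← F.map_comp, hfg, hg, sub_self]
    -- factor `φ - F.map gt` through `F.obj (cokernel f)`
    have hc := isColimitCoforkMapOfIsColimit' F (cokernel.condition f) (cokernelIsCokernel f)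
    obtain ⟨ψ, hψ⟩ := CokernelCofork.IsColimit.desc' hc (φ - F.map gt) hx
    obtain ⟨h, hh⟩ := (hsimple (cokernel f) M hq hM).2 ψ
    refine ⟨gt + cokernel.π f ≫ h, ?_⟩
    simp only at hh
    have hψ' : F.map (cokernel.π f) ≫ ψ = φ - F.map gt := hψ
    rw [F.map_add, F.map_comp (cokernel.π f) h, hh, hψ']
    abel

include η in
/-- Surjectivity of `F` on `Hom(X, Y)`, by induction on the length of `Y`. -/
lemma surj_general
    (hlen : ∀ X : A, CategoryTheory.FiniteLength X)
    (hsimple : ∀ (L₁ L₂ : A), Simple L₁ → Simple L₂ →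
      Function.Bijective (fun f : L₁ ⟶ L₂ => F.map f)) :
    ∀ {Y : A}, CategoryTheory.FiniteLength Y → ∀ (X : A),
      ∀ φ : F.obj X ⟶ F.obj Y, ∃ g : X ⟶ Y, F.map g = φ := by
  intro Y hY
  induction hY with
  | of_isZero h =>
    intro X φ
    exact ⟨0, by rw [F.map_zero]; exact ((F.map_isZero h).eq_of_tgt 0 φ)⟩
  | of_extension f hf hW ihq ih =>
    intro X φ
    haveI := hf
    -- `f : Y' ⟶ Y` mono with simple cokernel; `q := cokernel.π f`
    obtain ⟨h, hh⟩ := surj_to_simple F F' η hsimple (hlen X) (cokernel f) ihq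
      (φ ≫ F.map (cokernel.π f))
    have w : φ ≫ F.map (cokernel.π f) = 𝟙 (F.obj X) ≫ F.map h := by
      rw [hh, Category.id_comp]
    -- In `B`, `F.map (pullback.snd q h)` has a section, hence so does `pullback.snd q h`.
    have hsB : (pullback.lift φ (𝟙 _) w ≫ (PreservesPullback.iso F (cokernel.π f) h).inv) ≫
        F.map (pullback.snd (cokernel.π f) h) = 𝟙 _ := by
      rw [Category.assoc, PreservesPullback.iso_inv_snd, pullback.lift_snd]
    obtain ⟨t, ht⟩ := section_of_map_section F F' η (pullback.snd (cokernel.π f) h) _ hsB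
    set ψ₀ : X ⟶ _ := t ≫ pullback.fst (cokernel.π f) h with hψ₀
    have hlift : ψ₀ ≫ cokernel.π f = h := by
      rw [hψ₀, Category.assoc, pullback.condition, ← Category.assoc, ht, Category.id_comp]
    have hx : (φ - F.map ψ₀) ≫ F.map (cokernel.π f) = 0 := by
      rw [Preadditive.sub_comp, ← F.map_comp, hlift, hh, sub_self]
    -- factor `φ - F.map ψ₀` through `F.obj Y'` using that `f` is the kernel of its cokernel
    have hk := isLimitForkMapOfIsLimit' F (cokernel.condition f)
      (Abelian.monoIsKernelOfCokernel
        (CokernelCofork.ofπ (cokernel.π f) (cokernel.condition f)) (cokernelIsCokernel f))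
    obtain ⟨χ, hχ⟩ := KernelFork.IsLimit.lift' hk (φ - F.map ψ₀) hx
    obtain ⟨g, hg⟩ := ih X χ
    refine ⟨ψ₀ + g ≫ f, ?_⟩
    have hχ' : χ ≫ F.map f = φ - F.map ψ₀ := hχ
    rw [F.map_add, F.map_comp g f, hg, hχ']
    abel

end Aux

/-- Let `F : A ⥤ B` be an additive functor between abelian categories such that:
(i) `F` is exact; (ii) every object of `A` has finite length, and `F` induces an
isomorphism on `Hom` between any two simple objects; (iii) there is an additive functor
`F' : B ⥤ A` with `F ⋙ F' ≅ 𝟭 A`.  Then `F` is fully faithful. -/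
theorem full_embedding_of_exact_of_finiteLength_of_retraction
    {A : Type u₁} {B : Type u₂} [Category.{v₁} A] [Category.{v₂} B]
    [Abelian A] [Abelian B] (F : A ⥤ B) [F.Additive]
    [PreservesFiniteLimits F] [PreservesFiniteColimits F]
    (hlen : ∀ X : A, CategoryTheory.FiniteLength X)
    (hsimple : ∀ (L₁ L₂ : A), Simple L₁ → Simple L₂ →
      Function.Bijective (fun f : L₁ ⟶ L₂ => F.map f))
    (hinv : ∃ F' : B ⥤ A, F'.Additive ∧ Nonempty (F ⋙ F' ≅ 𝟭 A)) :
    ∀ X Y : A, Function.Bijective (fun f : X ⟶ Y => F.map f) := by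
  obtain ⟨F', _, ⟨η⟩⟩ := hinv
  haveI : F.Faithful := Functor.Faithful.of_comp_iso η
  intro X Y
  constructor
  · intro a b hab
    exact F.map_injective hab
  · intro φ
    exact surj_general F F' η hlen hsimple (hlen Y) X φ
end

section
/- Let T₁ and T₂ be abelian rigid symmetric monoidal categories, with commutativity constraints (braidings) C^{T₁} and C^{T₂} respectively. Let F̃ : T₁ ⥤ Z(T₂) be an additive braided monoidal functor to the Drinfeld center of T₂ (a central functor from T₁ to T₂); write F for the composition of F̃ with the forgetful functor Z(T₂) → T₂, and σ_{X,Y} : F(X) ⊗ Y ≅ Y ⊗ F(X) for the half-braiding component of F̃(X) at an object Y of T₂. Let U be an object of T₂, and suppose there exist an object V of T₁ and an epimorphism f : F(V) → U such that for every object X of T₂ the following diagram commutes: σ_{V,X} followed by id_X ⊗ f equals f ⊗ id_X followed by C^{T₂}_{U,X}. Then for every object X of T₁ one has σ_{X,U} = C^{T₂}_{F(X),U}. -/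
open CategoryTheory MonoidalCategory

universe v₁ v₂ u₁ u₂

/-! The half-braiding `σ_X` of `F X` is inverse to `σ_V` at `F X` because `F` is braided and
`T₁` is symmetric. Composing the hypothesis on `f` at `F X` with `σ_X` and the symmetry of `T₂`
gives `(F X ◁ f) ≫ σ_{X,U} = (F X ◁ f) ≫ C_{F X,U}`, and `F X ◁ f` is epi because tensoring
with an object of a rigid category is a left adjoint. -/

lemma CategoryTheory.Functor.symmetry_obj {C D : Type*} [Category C] [Category D]
    [MonoidalCategory C] [MonoidalCategory D] [SymmetricCategory C] [BraidedCategory D]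
    (F : C ⥤ D) [F.Braided] (X Y : C) :
    (β_ (F.obj X) (F.obj Y)).hom ≫ (β_ (F.obj Y) (F.obj X)).hom = 𝟙 _ := by
  have h := F.map_id (X ⊗ Y)
  rw [← SymmetricCategory.symmetry X Y, F.map_comp, F.map_braiding, F.map_braiding] at h
  simpa using congrArg (fun g => Functor.LaxMonoidal.μ F X Y ≫ g ≫
    Functor.OplaxMonoidal.δ F X Y) h

namespace CategoryTheory.Center

variable {C : Type*} [Category C] [MonoidalCategory C] [SymmetricCategory C]

lemma halfBraiding_hom_comp_whiskerRight {Z W : Center C} {U : C} (f : W.1 ⟶ U)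
    (hZW : (Z.2.β W.1).hom ≫ (W.2.β Z.1).hom = 𝟙 _)
    (hf : (W.2.β Z.1).hom ≫ Z.1 ◁ f = f ▷ Z.1 ≫ (β_ U Z.1).hom) :
    (Z.2.β W.1).hom ≫ f ▷ Z.1 = Z.1 ◁ f ≫ (β_ Z.1 U).hom := by
  rw [SymmetricCategory.braiding_swap_eq_inv_braiding, Iso.eq_comp_inv] at hf
  rw [← hf, Category.assoc, reassoc_of% hZW]

lemma halfBraiding_hom_eq_braiding_hom_of_epi [MonoidalClosed C] {Z W : Center C} {U : C}
    (f : W.1 ⟶ U) [Epi f]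
    (hZW : (Z.2.β W.1).hom ≫ (W.2.β Z.1).hom = 𝟙 _)
    (hf : (W.2.β Z.1).hom ≫ Z.1 ◁ f = f ▷ Z.1 ≫ (β_ U Z.1).hom) :
    (Z.2.β U).hom = (β_ Z.1 U).hom := by
  have : (tensorLeft Z.1).PreservesEpimorphisms :=
    Functor.preservesEpimorphisms_of_adjunction (ihom.adjunction Z.1)
  have : Epi (Z.1 ◁ f) := (tensorLeft Z.1).map_epi f
  rw [← cancel_epi (Z.1 ◁ f), HalfBraiding.naturality]
  exact halfBraiding_hom_comp_whiskerRight f hZW hf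

end CategoryTheory.Center

theorem halfBraiding_eq_braiding_of_epi_from_central_general
    {T₁ : Type u₁} {T₂ : Type u₂} [Category.{v₁} T₁] [Category.{v₂} T₂]
    [MonoidalCategory T₁] [MonoidalCategory T₂]
    [SymmetricCategory T₁] [SymmetricCategory T₂]
    [RigidCategory T₂]
    (F : T₁ ⥤ Center T₂) [F.Braided]
    (U : T₂) (V : T₁) (f : (F.obj V).1 ⟶ U) [Epi f]
    (hf : ∀ X : T₂, ((F.obj V).2.β X).hom ≫ (𝟙 X ⊗ₘ f) = (f ⊗ₘ 𝟙 X) ≫ (β_ U X).hom) :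
    ∀ X : T₁, ((F.obj X).2.β U).hom = (β_ (F.obj X).1 U).hom := by
  intro X
  let : MonoidalClosed T₂ := monoidalClosedOfLeftRigidCategory T₂
  refine Center.halfBraiding_hom_eq_braiding_hom_of_epi f ?_ ?_
  · exact congrArg Center.Hom.f (F.symmetry_obj X V)
  · simpa only [id_tensorHom, tensorHom_id] using hf (F.obj X).1

/-- Let `T₁`, `T₂` be abelian rigid symmetric monoidal categories, and let
`F : T₁ ⥤ Center T₂` be an additive central functor (a braided monoidal functor to the
Drinfeld center of `T₂`), with half-braiding components
`σ_{X,Y} = ((F.obj X).2.β Y).hom : F(X) ⊗ Y ⟶ Y ⊗ F(X)`.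
If `U : T₂` admits an epimorphism `f : F(V) ⟶ U` for some `V : T₁` such that for all
`X : T₂` the square `σ_{V,X} ≫ (𝟙 X ⊗ₘ f) = (f ⊗ₘ 𝟙 X) ≫ C^{T₂}_{U,X}` commutes,
then `σ_{X,U}` coincides with the symmetry `C^{T₂}_{F(X),U}` for every `X : T₁`. -/
theorem halfBraiding_eq_braiding_of_epi_from_central
    {T₁ : Type u₁} {T₂ : Type u₂} [Category.{v₁} T₁] [Category.{v₂} T₂]
    [Abelian T₁] [Abelian T₂] [MonoidalCategory T₁] [MonoidalCategory T₂]
    [SymmetricCategory T₁] [SymmetricCategory T₂]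
    [RigidCategory T₁] [RigidCategory T₂]
    (F : T₁ ⥤ Center T₂) [F.Braided] [(F ⋙ Center.forget T₂).Additive]
    (U : T₂) (V : T₁) (f : (F.obj V).1 ⟶ U) [Epi f]
    (hf : ∀ X : T₂, ((F.obj V).2.β X).hom ≫ (𝟙 X ⊗ₘ f) = (f ⊗ₘ 𝟙 X) ≫ (β_ U X).hom) :
    ∀ X : T₁, ((F.obj X).2.β U).hom = (β_ (F.obj X).1 U).hom :=
  halfBraiding_eq_braiding_of_epi_from_central_general F U V f hf
end
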